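/- arXiv:2407.07083 — 3 statements merged into one kernel-verified Lean document; each statement's English description precedes it below -/
import Mathlib

section
/- Let C, D be integers with C ≤ D, let y be a natural number, z an integer, and w an integer with C·2^y ≤ w ≤ D·2^y. Then z·2^y + w ≤ 0 if and only if there exists an integer r with C ≤ r ≤ D such that z + r ≤ 0 and (r-1)·2^y < w ≤ r·2^y. -/
namespace Int

theorem exists_sub_one_mul_lt_and_le_mul {m : ℤ} (hm : 0 < m) (w : ℤ) :
    ∃ r : ℤ, (r - 1) * m < w ∧ w ≤ r * m := by
  -- `r` is the ceiling of `w / m`, obtained as `-⌊-w / m⌋`.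
  refine ⟨-(-w / m), ?_, ?_⟩
  · linarith [lt_ediv_add_one_mul_self (-w) hm]
  · linarith [Int.ediv_mul_le (-w) hm.ne']

theorem le_of_sub_one_mul_lt_of_le_mul {m r a w : ℤ} (hm : 0 < m)
    (hr : (r - 1) * m < w) (ha : w ≤ a * m) : r ≤ a := by
  have : r - 1 < a := lt_of_mul_lt_mul_right (hr.trans_le ha) hm.le
  omega

end Int

theorem split_le_general (C D : ℤ) (y : ℕ) (z w : ℤ)
    (hw1 : C * 2 ^ y ≤ w) (hw2 : w ≤ D * 2 ^ y) :
    z * 2 ^ y + w ≤ 0 ↔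
      ∃ r : ℤ, C ≤ r ∧ r ≤ D ∧ z + r ≤ 0 ∧ (r - 1) * 2 ^ y < w ∧ w ≤ r * 2 ^ y := by
  have hm : (0 : ℤ) < 2 ^ y := by positivity
  constructor
  · intro h
    obtain ⟨r, hlt, hle⟩ := Int.exists_sub_one_mul_lt_and_le_mul hm w
    have hrz : r ≤ -z := Int.le_of_sub_one_mul_lt_of_le_mul hm hlt (by linarith)
    exact ⟨r, le_of_mul_le_mul_right (hw1.trans hle) hm,
      Int.le_of_sub_one_mul_lt_of_le_mul hm hlt hw2, by omega, hlt, hle⟩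
  · rintro ⟨r, -, -, hzr, -, hle⟩
    calc z * 2 ^ y + w ≤ (z + r) * 2 ^ y := by linarith
      _ ≤ 0 := mul_nonpos_of_nonpos_of_nonneg hzr hm.le

theorem split_le (C D : ℤ) (hCD : C ≤ D) (y : ℕ) (z w : ℤ)
    (hw1 : C * 2 ^ y ≤ w) (hw2 : w ≤ D * 2 ^ y) :
    z * 2 ^ y + w ≤ 0 ↔
      ∃ r : ℤ, C ≤ r ∧ r ≤ D ∧ z + r ≤ 0 ∧ (r - 1) * 2 ^ y < w ∧ w ≤ r * 2 ^ y :=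
  split_le_general C D y z w hw1 hw2
end

section
/- Let C, D be integers with C ≤ D, let y be a natural number, z an integer, and w an integer with C·2^y ≤ w ≤ D·2^y. Then z·2^y + w < 0 if and only if there exists an integer r with C ≤ r ≤ D such that either (z + r + 1 ≤ 0 and w = r·2^y) or (z + r ≤ 0 and (r-1)·2^y < w < r·2^y). -/
/-!
With `P = 2 ^ y > 0`, write `w` as `r * P` or strictly between `(r - 1) * P` and `r * P`,
i.e. `r = ⌈w / P⌉`. Then `z * P + w < 0` reads `z + r < 0` in the first case and `z + r - 1 < 0`
in the second, and the bounds on `w` pin `r` between `C` and `D`.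
-/

namespace Int

theorem exists_sub_one_mul_lt_le_mul {P : ℤ} (hP : 0 < P) (w : ℤ) :
    ∃ r : ℤ, (r - 1) * P < w ∧ w ≤ r * P := by
  refine ⟨-(-w / P), ?_, ?_⟩
  · have := Int.lt_ediv_add_one_mul_self (-w) hP
    linarith
  · have := Int.ediv_mul_le (-w) hP.ne'
    linarith

theorem split_of_mul_add_neg {P r w : ℤ} (hP : 0 < P) {z : ℤ}
    (hlo : (r - 1) * P < w) (hhi : w ≤ r * P) (h : z * P + w < 0) :
    (z + r + 1 ≤ 0 ∧ w = r * P) ∨ (z + r ≤ 0 ∧ (r - 1) * P < w ∧ w < r * P) := by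
  rcases hhi.eq_or_lt with heq | hlt
  · have : (z + r) * P < 0 := by linarith
    exact Or.inl ⟨by linarith [neg_of_mul_neg_left this hP.le], heq⟩
  · have : (z + r - 1) * P < 0 := by linarith
    exact Or.inr ⟨by linarith [neg_of_mul_neg_left this hP.le], hlo, hlt⟩

end Int

theorem split_lt_general (C D : ℤ) (y : ℕ) (z w : ℤ)
    (hw1 : C * 2 ^ y ≤ w) (hw2 : w ≤ D * 2 ^ y) :
    z * 2 ^ y + w < 0 ↔
      ∃ r : ℤ, C ≤ r ∧ r ≤ D ∧
        ((z + r + 1 ≤ 0 ∧ w = r * 2 ^ y) ∨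
         (z + r ≤ 0 ∧ (r - 1) * 2 ^ y < w ∧ w < r * 2 ^ y)) := by
  have hP : (0 : ℤ) < 2 ^ y := by positivity
  constructor
  · intro h
    obtain ⟨r, hlo, hhi⟩ := Int.exists_sub_one_mul_lt_le_mul hP w
    have hCr : C ≤ r := le_of_mul_le_mul_right (hw1.trans hhi) hP
    have hrD : r - 1 < D := lt_of_mul_lt_mul_right (hlo.trans_le hw2) hP.le
    exact ⟨r, hCr, by omega, Int.split_of_mul_add_neg hP hlo hhi h⟩
  · rintro ⟨r, -, -, ⟨hzr, rfl⟩ | ⟨hzr, -, hlt⟩⟩ <;> nlinarith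

theorem split_lt (C D : ℤ) (hCD : C ≤ D) (y : ℕ) (z w : ℤ)
    (hw1 : C * 2 ^ y ≤ w) (hw2 : w ≤ D * 2 ^ y) :
    z * 2 ^ y + w < 0 ↔
      ∃ r : ℤ, C ≤ r ∧ r ≤ D ∧
        ((z + r + 1 ≤ 0 ∧ w = r * 2 ^ y) ∨
         (z + r ≤ 0 ∧ (r - 1) * 2 ^ y < w ∧ w < r * 2 ^ y)) :=
  split_lt_general C D y z w hw1 hw2
end

section
/- Let α ≥ 1 be a natural number and define b_0 = 1 and b_{i+1} = lcm(b_i, φ(α·b_i)), where φ is Euler's totient. Then for every i ≥ 1, b_i ≤ α^{2·i²}. -/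
/-!
Write `b (i + 1) = k i * b i`. The multipliers never increase: `φ (α * b i)` divides both
`b (i + 1)` and `φ (α * b (i + 1)) = φ (α * b i * k i) ≤ φ (α * b i) * k i`, so
`lcm (b (i + 1)) (φ (α * b (i + 1))) ≤ b (i + 1) * k i`. As `k 0 = φ α ≤ α`, this gives
`b i ≤ α ^ i`, far below `α ^ (2 * i ^ 2)`.
-/

open scoped Nat

namespace Nat

theorem totient_mul_le_totient_mul (m k : ℕ) : φ (m * k) ≤ φ m * k := by
  induction k using Nat.recOnMul generalizing m with
  | zero => simp
  | one => simp
  | prime p hp =>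
    rw [mul_comm m p, mul_comm (φ m) p]
    by_cases hpm : p ∣ m
    · rw [totient_mul_of_prime_of_dvd hp hpm]
    · rw [totient_mul_of_prime_of_not_dvd hp hpm]
      exact Nat.mul_le_mul_right _ (Nat.sub_le p 1)
  | mul a c iha ihc =>
    calc φ (m * (a * c)) = φ (m * a * c) := by rw [Nat.mul_assoc]
      _ ≤ φ (m * a) * c := ihc _
      _ ≤ φ m * a * c := Nat.mul_le_mul_right c (iha m)
      _ = φ m * (a * c) := Nat.mul_assoc ..

theorem lcm_le_mul_of_dvd {d x y k : ℕ} (hdx : d ∣ x) (hdy : d ∣ y) (hy : y ≤ d * k) :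
    Nat.lcm x y ≤ x * k := by
  obtain ⟨x', rfl⟩ := hdx
  obtain ⟨y', rfl⟩ := hdy
  rcases Nat.eq_zero_or_pos d with rfl | hd; · simp
  rcases Nat.eq_zero_or_pos x' with rfl | hx; · simp
  rcases Nat.eq_zero_or_pos y' with rfl | hy0; · simp
  have hy' : y' ≤ k := Nat.le_of_mul_le_mul_left hy hd
  calc Nat.lcm (d * x') (d * y') = d * Nat.lcm x' y' := Nat.lcm_mul_left ..
    _ ≤ d * (x' * y') := by
      gcongr
      exact Nat.le_of_dvd (by positivity) (Nat.lcm_dvd_mul x' y')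
    _ ≤ d * x' * k := by rw [← Nat.mul_assoc]; gcongr

end Nat

theorem lcm_totient_mul_le (α m k : ℕ) (h : φ (α * m) ∣ m * k) :
    Nat.lcm (m * k) (φ (α * (m * k))) ≤ m * k * k := by
  refine Nat.lcm_le_mul_of_dvd h (Nat.totient_dvd_of_dvd ⟨k, (Nat.mul_assoc ..).symm⟩) ?_
  rw [← Nat.mul_assoc]
  exact Nat.totient_mul_le_totient_mul _ _

section LcmTotientSeq

variable {α : ℕ} {b : ℕ → ℕ}

theorem lcm_totient_seq_pos (hα : 1 ≤ α) (hb0 : b 0 = 1)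
    (hbrec : ∀ i, b (i + 1) = Nat.lcm (b i) (φ (α * b i))) (i : ℕ) : 0 < b i := by
  induction i with
  | zero => rw [hb0]; exact Nat.one_pos
  | succ i ih =>
    rw [hbrec]
    exact Nat.lcm_pos ih (Nat.totient_pos.mpr (Nat.mul_pos hα ih))

theorem lcm_totient_seq_succ_le (hα : 1 ≤ α) (hb0 : b 0 = 1)
    (hbrec : ∀ i, b (i + 1) = Nat.lcm (b i) (φ (α * b i))) (n : ℕ) : b (n + 1) ≤ α * b n := by
  induction n with
  | zero => rw [hbrec, hb0, Nat.lcm_one_left, Nat.mul_one]; exact Nat.totient_le α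
  | succ n ih =>
    obtain ⟨k, hk⟩ : b n ∣ b (n + 1) := hbrec n ▸ Nat.dvd_lcm_left _ _
    have hkα : k ≤ α := by
      refine Nat.le_of_mul_le_mul_left ?_ (lcm_totient_seq_pos hα hb0 hbrec n)
      rw [Nat.mul_comm (b n) α, ← hk]
      exact ih
    have hdvd : φ (α * b n) ∣ b n * k := hk ▸ hbrec n ▸ Nat.dvd_lcm_right _ _
    calc b (n + 1 + 1) = Nat.lcm (b n * k) (φ (α * (b n * k))) := by rw [hbrec, hk]
      _ ≤ b n * k * k := lcm_totient_mul_le α (b n) k hdvd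
      _ ≤ α * (b n * k) := by rw [Nat.mul_comm α]; gcongr
      _ = α * b (n + 1) := by rw [hk]

theorem lcm_totient_seq_le_pow (hα : 1 ≤ α) (hb0 : b 0 = 1)
    (hbrec : ∀ i, b (i + 1) = Nat.lcm (b i) (φ (α * b i))) (n : ℕ) : b n ≤ α ^ n := by
  induction n with
  | zero => rw [hb0, Nat.pow_zero]
  | succ n ih =>
    calc b (n + 1) ≤ α * b n := lcm_totient_seq_succ_le hα hb0 hbrec n
      _ ≤ α * α ^ n := Nat.mul_le_mul_left α ih
      _ = α ^ (n + 1) := (Nat.pow_succ' ..).symm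

end LcmTotientSeq

theorem totient_lcm_seq_bound (α : ℕ) (hα : 1 ≤ α) (b : ℕ → ℕ)
    (hb0 : b 0 = 1)
    (hbrec : ∀ i, b (i + 1) = Nat.lcm (b i) (Nat.totient (α * b i))) :
    ∀ i, 1 ≤ i → b i ≤ α ^ (2 * i ^ 2) := by
  intro i _
  calc b i ≤ α ^ i := lcm_totient_seq_le_pow hα hb0 hbrec i
    _ ≤ α ^ (2 * i ^ 2) := Nat.pow_le_pow_right hα (by nlinarith)
end
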